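/- Let q be a prime power, let s₁, s₂ ≥ 0 be integers and r ≥ 1 an integer, and for partitions λ, φ let ν(λ,φ) be as defined in the context. Then ν(λ,φ) ≥ 0 for all partitions λ, φ, and ν(λ,φ) > 0 if and only if −s₁ ≤ λ_j − φ_j ≤ s₂ for all 1 ≤ j ≤ r. -/

import Mathlib

open scoped BigOperators

/-- `η_q(k) = ∏_{i=1}^{k} (1 - q^{-i})`. -/
noncomputable def etaQ (q : ℝ) (k : ℕ) : ℝ :=
  ∏ i ∈ Finset.range k, (1 - q ^ (-(i : ℝ) - 1))

/-- `η_q` at an integer argument (only meaningful for nonnegative arguments). -/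
noncomputable def etaZ (q : ℝ) (k : ℤ) : ℝ := etaQ q k.toNat

/-- `η_q(∞) = ∏_{i=1}^{∞} (1 - q^{-i})`. -/
noncomputable def etaInf (q : ℝ) : ℝ := ∏' i : ℕ, (1 - q ^ (-(i : ℝ) - 1))

/-- `Qf_q(λ₋₁,λ,φ₋₁,φ,s₁,s₂)` of the paper. -/
noncomputable def Qf (q : ℝ) (lm l pm ph s₁ s₂ : ℤ) : ℝ :=
  ∑ e ∈ Finset.range ((lm - l).toNat + 1), ∑ f ∈ Finset.range ((pm - ph).toNat + 1),
    (-1 : ℝ) ^ (e + f) *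
      q ^ (((l : ℝ) + e) * ((l : ℝ) + e - 1) / 2 - (l : ℝ) * ((l : ℝ) - 1) / 2
            - (s₁ : ℝ) * ((l : ℝ) + e)
            + ((ph : ℝ) + f) * ((ph : ℝ) + f - 1) / 2 - (ph : ℝ) * ((ph : ℝ) - 1) / 2
            - (s₂ : ℝ) * ((ph : ℝ) + f)
            + ((l : ℝ) + e) * ((ph : ℝ) + f) - ((l : ℝ) + e) ^ 2 - ((ph : ℝ) + f) ^ 2) /
      (etaQ q e * etaQ q ((lm - l).toNat - e) * etaQ q f * etaQ q ((pm - ph).toNat - f))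

/-- `Q̄f_q(λ₋₁,λ,φ₋₁,φ,s₁,s₂) = q^{λ²+s₁λ+φ²+s₂φ-λφ} η_q(λ₋₁-λ) η_q(φ₋₁-φ)
⬝ Qf_q(λ₋₁,λ,φ₋₁,φ,s₁,s₂)`. -/
noncomputable def Qbar (q : ℝ) (lm l pm ph s₁ s₂ : ℤ) : ℝ :=
  q ^ ((l : ℝ) ^ 2 + (s₁ : ℝ) * (l : ℝ) + (ph : ℝ) ^ 2 + (s₂ : ℝ) * (ph : ℝ)
        - (l : ℝ) * (ph : ℝ)) *
    etaQ q (lm - l).toNat * etaQ q (pm - ph).toNat * Qf q lm l pm ph s₁ s₂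

/-- A partition, encoded as a weakly decreasing eventually-zero sequence `l : ℕ → ℕ`;
`l i` is the part `λ_{i+1}` (`0`-based indexing). -/
def PartitionSeq : Type :=
  {l : ℕ → ℕ // (∀ i, l (i + 1) ≤ l i) ∧ ∃ N, ∀ i, N ≤ i → l i = 0}

/-- The measure `ν(λ,φ)` (`0`-based: `l j = λ_{j+1}`, `ph j = φ_{j+1}`). -/
noncomputable def nuDP (q : ℝ) (s₁ s₂ : ℤ) (r : ℕ) (l ph : ℕ → ℕ) : ℝ :=
  if s₂ < (l 0 : ℤ) - (ph 0 : ℤ) ∨ s₁ < (ph 0 : ℤ) - (l 0 : ℤ) then 0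
  else
    q ^ ((∑ j ∈ Finset.range r, (l j : ℝ) * (ph j : ℝ))
          + ∑' j : ℕ, (-(l j : ℝ) ^ 2 - (s₁ : ℝ) * (l j : ℝ)
              - (ph j : ℝ) ^ 2 - (s₂ : ℝ) * (ph j : ℝ)))
      / (∏' j : ℕ, (etaQ q (l j - l (j + 1)) * etaQ q (ph j - ph (j + 1))))
      * (etaInf q * etaZ q (s₁ + s₂) /
          (etaZ q (s₂ - (l 0 : ℤ) + (ph 0 : ℤ)) * etaZ q (s₁ + (l 0 : ℤ) - (ph 0 : ℤ))))
      * (∏ j ∈ Finset.range (r - 1),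
          Qbar q (l j : ℤ) (l (j + 1) : ℤ) (ph j : ℤ) (ph (j + 1) : ℤ) s₁ s₂)
      * (∏ i ∈ Finset.range (l (r - 1)), (1 - q ^ (-(s₁ : ℝ) - ((i : ℝ) + 1))))
      * (∏ i ∈ Finset.range (ph (r - 1)), (1 - q ^ (-(s₂ : ℝ) - ((i : ℝ) + 1))))

/-!
All factors of `ν` other than the `Q̄f` are positive (for `η_q(∞)` because `∑ q^{-i}`
converges). Write `Q̄f(λ+a, λ, φ+b, φ)` with `α = s₁ + λ - φ`, `β = s₂ + φ - λ`, `x = q⁻¹`.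
The `q`-binomial theorem `∏_{i<a} (1 - z x^i) = ∑_e (-1)^e [a, e]_x x^{C(e,2)} z^e` collapses
the sum over `e`, leaving an alternating sum `∑_{f ≤ b} (-1)^f t_f` in which `t_f` carries the
factor `∏_{i<a} (1 - q^{f-1-α-i})`. This factor vanishes for `α < f ≤ α + a`, so for `α < 0`
(and `b ≤ α + a`) the whole sum is `0`; the symmetry
`Q̄f(λ₋₁,λ,φ₋₁,φ,s₁,s₂) = Q̄f(φ₋₁,φ,λ₋₁,λ,s₂,s₁)` handles `β < 0`. For `α, β ≥ 0` only the
terms with `f ≤ min(b, α)` survive, and there `t_f` is positive and, as `q ≥ 2`, strictly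
decreasing, so the alternating sum is positive. Hence `ν(λ, φ)` vanishes exactly when the band
condition fails: at `j = 1` through the explicit case distinction, and at a first failing
`j > 1` through the factor `Q̄f(λ_{j-1}, λ_j, φ_{j-1}, φ_j)`.
-/

open Finset

noncomputable def qPoch (x : ℝ) (k : ℕ) : ℝ := ∏ i ∈ range k, (1 - x ^ (i + 1))

noncomputable def gaussBinom (x : ℝ) (a e : ℕ) : ℝ := qPoch x a / (qPoch x e * qPoch x (a - e))

section GaussBinom

variable {x : ℝ}

lemma qPoch_zero : qPoch x 0 = 1 := prod_range_zero _

lemma qPoch_succ (k : ℕ) : qPoch x (k + 1) = qPoch x k * (1 - x ^ (k + 1)) :=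
  prod_range_succ _ _

lemma one_sub_pow_pos (hx₀ : 0 ≤ x) (hx₁ : x < 1) {k : ℕ} (hk : k ≠ 0) : 0 < 1 - x ^ k :=
  sub_pos.2 (pow_lt_one₀ hx₀ hx₁ hk)

lemma qPoch_pos (hx₀ : 0 ≤ x) (hx₁ : x < 1) (k : ℕ) : 0 < qPoch x k :=
  prod_pos fun i _ => one_sub_pow_pos hx₀ hx₁ i.succ_ne_zero

lemma gaussBinom_pos (hx₀ : 0 ≤ x) (hx₁ : x < 1) (a e : ℕ) : 0 < gaussBinom x a e :=
  div_pos (qPoch_pos hx₀ hx₁ a) (mul_pos (qPoch_pos hx₀ hx₁ e) (qPoch_pos hx₀ hx₁ _))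

lemma gaussBinom_zero_right (hx₀ : 0 ≤ x) (hx₁ : x < 1) (a : ℕ) : gaussBinom x a 0 = 1 := by
  rw [gaussBinom, qPoch_zero, Nat.sub_zero, one_mul, div_self (qPoch_pos hx₀ hx₁ a).ne']

lemma gaussBinom_self (hx₀ : 0 ≤ x) (hx₁ : x < 1) (a : ℕ) : gaussBinom x a a = 1 := by
  rw [gaussBinom, Nat.sub_self, qPoch_zero, mul_one, div_self (qPoch_pos hx₀ hx₁ a).ne']

lemma gaussBinom_succ_succ (hx₀ : 0 ≤ x) (hx₁ : x < 1) {a e : ℕ} (h : e < a) :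
    gaussBinom x (a + 1) (e + 1) = gaussBinom x a (e + 1) + x ^ (a - e) * gaussBinom x a e := by
  obtain ⟨m, rfl⟩ := Nat.exists_eq_add_of_lt h
  have hpos := qPoch_pos hx₀ hx₁
  have h₂ := one_sub_pow_pos hx₀ hx₁ (Nat.succ_ne_zero e)
  have h₃ := one_sub_pow_pos hx₀ hx₁ (Nat.succ_ne_zero m)
  simp only [gaussBinom, show e + m + 1 + 1 - (e + 1) = m + 1 by omega,
    show e + m + 1 - (e + 1) = m by omega, show e + m + 1 - e = m + 1 by omega]
  rw [qPoch_succ (e + m + 1), qPoch_succ e, qPoch_succ m]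
  have := (hpos (e + m + 1)).ne'; have := (hpos e).ne'; have := (hpos m).ne'
  field_simp
  ring

lemma gaussBinom_succ_mul (hx₀ : 0 ≤ x) (hx₁ : x < 1) {b f : ℕ} (h : f < b) :
    gaussBinom x b (f + 1) * (1 - x ^ (f + 1)) = gaussBinom x b f * (1 - x ^ (b - f)) := by
  obtain ⟨m, rfl⟩ := Nat.exists_eq_add_of_lt h
  have hpos := qPoch_pos hx₀ hx₁
  have h₂ := one_sub_pow_pos hx₀ hx₁ (Nat.succ_ne_zero f)
  have h₃ := one_sub_pow_pos hx₀ hx₁ (Nat.succ_ne_zero m)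
  simp only [gaussBinom, show f + m + 1 - (f + 1) = m by omega, show f + m + 1 - f = m + 1 by omega]
  rw [qPoch_succ f, qPoch_succ m]
  have := (hpos (f + m + 1)).ne'; have := (hpos f).ne'; have := (hpos m).ne'
  field_simp

theorem prod_one_sub_mul_pow_eq_sum (hx₀ : 0 ≤ x) (hx₁ : x < 1) (z : ℝ) (a : ℕ) :
    ∏ i ∈ range a, (1 - z * x ^ i) =
      ∑ e ∈ range (a + 1), (-1) ^ e * gaussBinom x a e * x ^ e.choose 2 * z ^ e := by
  induction a with
  | zero => simp [gaussBinom_zero_right hx₀ hx₁]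
  | succ a ih =>
    set c : ℕ → ℕ → ℝ := fun a e => (-1) ^ e * gaussBinom x a e * x ^ e.choose 2 with hc
    have hpascal : ∀ e < a, c (a + 1) (e + 1) = c a (e + 1) - x ^ a * c a e := by
      intro e he
      simp only [hc, gaussBinom_succ_succ hx₀ hx₁ he, Nat.choose_succ_succ', Nat.choose_one_right]
      rw [show x ^ a = x ^ e * x ^ (a - e) by rw [← pow_add, Nat.add_sub_cancel' he.le]]
      ring
    have htop : c (a + 1) (a + 1) = -(x ^ a * c a a) := by
      simp only [hc, gaussBinom_self hx₀ hx₁, Nat.choose_succ_succ', Nat.choose_one_right]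
      ring
    have hbot : c (a + 1) 0 = c a 0 := by simp [hc, gaussBinom_zero_right hx₀ hx₁]
    calc ∏ i ∈ range (a + 1), (1 - z * x ^ i)
        = (∑ e ∈ range (a + 1), c a e * z ^ e) * (1 - z * x ^ a) := by
          rw [prod_range_succ, ih]
      _ = c a 0 + ∑ e ∈ range a, (c a (e + 1) - x ^ a * c a e) * z ^ (e + 1)
            - x ^ a * c a a * z ^ (a + 1) := by
          rw [mul_one_sub, sum_mul, sum_range_succ', sum_range_succ]
          simp only [sub_mul, sum_sub_distrib]
          have hshift : ∀ e, c a e * z ^ e * (z * x ^ a) = x ^ a * c a e * z ^ (e + 1) :=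
            fun e => by ring
          simp only [hshift]
          ring
      _ = ∑ e ∈ range (a + 1 + 1), c (a + 1) e * z ^ e := by
          rw [sum_range_succ', sum_range_succ, htop, hbot, sum_congr rfl fun e he =>
            by rw [← hpascal e (mem_range.1 he)]]
          ring

end GaussBinom

theorem sum_range_alternating_mem_Ioc {R : Type*} [CommRing R] [LinearOrder R]
    [IsStrictOrderedRing R] (n : ℕ) {t : ℕ → R} (hpos : ∀ f ≤ n, 0 < t f)
    (hanti : ∀ f < n, t (f + 1) < t f) :
    ∑ f ∈ range (n + 1), (-1) ^ f * t f ∈ Set.Ioc 0 (t 0) := by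
  induction n generalizing t with
  | zero => simpa using hpos 0 le_rfl
  | succ n ih =>
    obtain ⟨h₀, h₁⟩ := ih (t := fun f => t (f + 1)) (fun f hf => hpos _ (by omega))
      (fun f hf => hanti _ (by omega))
    have h₂ := hanti 0 (by omega)
    rw [sum_range_succ']
    simp only [pow_succ, mul_neg_one, neg_mul, sum_neg_distrib, pow_zero, one_mul]
    constructor <;> linarith

section Qbar

variable {q : ℝ}

lemma rpow_neg_natCast_sub_one (hq : 0 ≤ q) (i : ℕ) : q ^ (-(i : ℝ) - 1) = q⁻¹ ^ (i + 1) := by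
  rw [show -(i : ℝ) - 1 = -((i + 1 : ℕ) : ℝ) by push_cast; ring, Real.rpow_neg hq,
    Real.rpow_natCast, inv_pow]

lemma etaQ_eq_qPoch (hq : 0 ≤ q) (k : ℕ) : etaQ q k = qPoch q⁻¹ k :=
  prod_congr rfl fun i _ => by rw [rpow_neg_natCast_sub_one hq]

lemma etaQ_pos (hq : 1 < q) (k : ℕ) : 0 < etaQ q k := by
  rw [etaQ_eq_qPoch (by linarith)]
  exact qPoch_pos (by positivity) (inv_lt_one_of_one_lt₀ hq) k

noncomputable def qbarInner (q : ℝ) (a : ℕ) (α : ℤ) (f : ℕ) : ℝ :=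
  ∏ i ∈ range a, (1 - q ^ ((f : ℤ) - 1 - α - i))

lemma sum_gaussBinom_eq_qbarInner (hq : 1 < q) (a : ℕ) (α : ℤ) (f : ℕ) :
    ∑ e ∈ range (a + 1),
      (-1) ^ e * gaussBinom q⁻¹ a e * q ^ ((e : ℤ) * f - α * e - (e + 1).choose 2) =
      qbarInner q a α f := by
  have hq₀ : q ≠ 0 := by positivity
  rw [qbarInner, ← prod_congr rfl fun i _ => show 1 - q ^ ((f : ℤ) - 1 - α) * q⁻¹ ^ i = _ by
      rw [← zpow_natCast, ← zpow_neg_one, ← zpow_mul, ← zpow_add₀ hq₀]; ring_nf,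
    prod_one_sub_mul_pow_eq_sum (by positivity) (inv_lt_one_of_one_lt₀ hq)]
  refine sum_congr rfl fun e _ => ?_
  rw [mul_assoc _ (q⁻¹ ^ _), ← zpow_natCast, ← zpow_natCast, ← zpow_natCast, ← zpow_neg_one,
    ← zpow_mul, ← zpow_mul, ← zpow_add₀ hq₀, Nat.choose_succ_succ', Nat.choose_one_right]
  push_cast
  ring_nf

noncomputable def qbarTerm (q : ℝ) (a b : ℕ) (α β : ℤ) (f : ℕ) : ℝ :=
  gaussBinom q⁻¹ b f * q ^ (-((f + 1).choose 2 : ℤ) - β * f) * qbarInner q a α f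

lemma Qbar_add_eq_sum (hq : 1 < q) (l ph s₁ s₂ : ℤ) (a b : ℕ) :
    Qbar q (l + a) l (ph + b) ph s₁ s₂ =
      ∑ f ∈ range (b + 1), (-1) ^ f * qbarTerm q a b (s₁ + l - ph) (s₂ + ph - l) f := by
  have hq₀ : 0 < q := by linarith
  simp only [Qbar, Qf, add_sub_cancel_left, Int.toNat_natCast, mul_sum]
  rw [sum_comm]
  refine sum_congr rfl fun f _ => ?_
  rw [qbarTerm, ← sum_gaussBinom_eq_qbarInner hq, mul_sum, mul_sum]
  refine sum_congr rfl fun e _ => ?_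
  simp only [gaussBinom, ← etaQ_eq_qPoch hq₀.le]
  have regroup_left : ∀ u A B s v D : ℝ, u * A * B * (s * v / D) = (u * v) * (s * A * B / D) := by
    intros; ring
  have regroup_right : ∀ sf Gb wF se Ga wE : ℝ,
      sf * (Gb * wF * (se * Ga * wE)) = (wF * wE) * (sf * se * (Gb * Ga)) := by
    intros; ring
  rw [regroup_left, regroup_right, ← Real.rpow_add hq₀, ← zpow_add₀ hq₀.ne', ← Real.rpow_intCast]
  congr 1
  · congr 1
    push_cast [Nat.choose_succ_succ', Nat.choose_one_right, Nat.cast_choose_two]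
    ring
  · rw [pow_add]
    field_simp

lemma qbarInner_eq_zero {a : ℕ} {α : ℤ} {f : ℕ} (h₁ : α < f) (h₂ : f ≤ α + a) :
    qbarInner q a α f = 0 :=
  prod_eq_zero (i := ((f : ℤ) - α - 1).toNat) (mem_range.2 (by omega))
    (by rw [show (f : ℤ) - 1 - α - ((f : ℤ) - α - 1).toNat = 0 by omega, zpow_zero, sub_self])

lemma qbarInner_pos (hq : 1 < q) {a : ℕ} {α : ℤ} {f : ℕ} (h : f ≤ α) : 0 < qbarInner q a α f :=
  prod_pos fun i _ => sub_pos.2 (zpow_lt_one_of_neg₀ hq (by omega))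

lemma qbarInner_succ_mul (a : ℕ) (α : ℤ) (f : ℕ) :
    qbarInner q a α (f + 1) * (1 - q ^ ((f : ℤ) - α - a)) =
      qbarInner q a α f * (1 - q ^ ((f : ℤ) - α)) := by
  have hshift : qbarInner q a α (f + 1) = ∏ i ∈ range a, (1 - q ^ ((f : ℤ) - α - i)) :=
    prod_congr rfl fun i _ => by push_cast; ring_nf
  rw [hshift, ← prod_range_succ (fun i : ℕ => 1 - q ^ ((f : ℤ) - α - i)), prod_range_succ',
    qbarInner]
  simp only [Nat.cast_add, Nat.cast_one, CharP.cast_eq_zero, sub_zero]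
  congr 1
  exact prod_congr rfl fun i _ => by ring_nf

lemma qbarTerm_eq_zero {a b : ℕ} {α β : ℤ} {f : ℕ} (h₁ : α < f) (h₂ : f ≤ α + a) :
    qbarTerm q a b α β f = 0 := by
  rw [qbarTerm, qbarInner_eq_zero h₁ h₂, mul_zero]

lemma qbarTerm_pos (hq : 1 < q) {a b : ℕ} {α β : ℤ} {f : ℕ} (h : f ≤ α) :
    0 < qbarTerm q a b α β f :=
  mul_pos (mul_pos (gaussBinom_pos (by positivity) (inv_lt_one_of_one_lt₀ hq) b f)
    (zpow_pos (by linarith) _)) (qbarInner_pos hq h)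

-- The left side over the right side is `qbarTerm (f + 1) / qbarTerm f`; the bound rests on
-- `q⁻¹ ^ (f + 1) ≤ 1 / 2`, which is where `q ≥ 2` is needed.
lemma qbarTerm_ratio_lt (hq : 2 ≤ q) {a b : ℕ} {α β : ℤ} (hβ : 0 ≤ β) {f : ℕ}
    (hfα : (f : ℤ) + 1 ≤ α) (hfb : f + 1 ≤ b) :
    q ^ (-(f : ℤ) - 1 - β) * (1 - q⁻¹ ^ (b - f)) * (1 - q ^ ((f : ℤ) - α)) <
      (1 - q⁻¹ ^ (f + 1)) * (1 - q ^ ((f : ℤ) - α - a)) := by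
  have hq₁ : 1 < q := by linarith
  have hx₀ : 0 ≤ q⁻¹ := by positivity
  have hx₁ : q⁻¹ < 1 := inv_lt_one_of_one_lt₀ hq₁
  set u := q⁻¹ ^ (f + 1)
  have hu : q ^ (-(f : ℤ) - 1 - β) ≤ u := calc
    _ ≤ q ^ (-((f + 1 : ℕ) : ℤ)) := zpow_le_zpow_right₀ hq₁.le (by omega)
    _ = u := by rw [zpow_neg, zpow_natCast, ← inv_pow]
  have hu_half : u ≤ 1 / 2 := calc
    u ≤ q⁻¹ := pow_le_of_le_one hx₀ hx₁.le (Nat.succ_ne_zero f)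
    _ ≤ 1 / 2 := by rw [one_div]; exact inv_anti₀ (by norm_num) hq
  have hC : 0 < 1 - q ^ ((f : ℤ) - α) := sub_pos.2 (zpow_lt_one_of_neg₀ hq₁ (by omega))
  have hCD : q ^ ((f : ℤ) - α - a) ≤ q ^ ((f : ℤ) - α) := zpow_le_zpow_right₀ hq₁.le (by omega)
  have hB : 1 - q⁻¹ ^ (b - f) < 1 := sub_lt_self _ (pow_pos (by positivity) _)
  calc q ^ (-(f : ℤ) - 1 - β) * (1 - q⁻¹ ^ (b - f)) * (1 - q ^ ((f : ℤ) - α))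
      ≤ u * (1 - q⁻¹ ^ (b - f)) * (1 - q ^ ((f : ℤ) - α)) := by
        gcongr
        exact (one_sub_pow_pos hx₀ hx₁ (by omega)).le
    _ < u * 1 * (1 - q ^ ((f : ℤ) - α)) := by gcongr
    _ ≤ (1 - u) * (1 - q ^ ((f : ℤ) - α - a)) := by
        rw [mul_one]; exact mul_le_mul (by linarith) (by linarith) hC.le (by linarith)

lemma qbarTerm_succ_lt (hq : 2 ≤ q) {a b : ℕ} {α β : ℤ} (hβ : 0 ≤ β) {f : ℕ}
    (hfα : (f : ℤ) + 1 ≤ α) (hfb : f + 1 ≤ b) :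
    qbarTerm q a b α β (f + 1) < qbarTerm q a b α β f := by
  have hq₁ : 1 < q := by linarith
  have hx₀ : 0 ≤ q⁻¹ := by positivity
  have hx₁ : q⁻¹ < 1 := inv_lt_one_of_one_lt₀ hq₁
  have hD : 0 < (1 - q⁻¹ ^ (f + 1)) * (1 - q ^ ((f : ℤ) - α - a)) :=
    mul_pos (one_sub_pow_pos hx₀ hx₁ f.succ_ne_zero)
      (sub_pos.2 (zpow_lt_one_of_neg₀ hq₁ (by omega)))
  have hpow : q ^ (-(((f + 1 + 1).choose 2 : ℕ) : ℤ) - β * (f + 1 : ℕ)) =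
      q ^ (-((f + 1).choose 2 : ℤ) - β * f) * q ^ (-(f : ℤ) - 1 - β) := by
    rw [← zpow_add₀ (by positivity), Nat.choose_succ_succ' (f + 1), Nat.choose_one_right]
    push_cast
    ring_nf
  have hmul : qbarTerm q a b α β (f + 1) * ((1 - q⁻¹ ^ (f + 1)) * (1 - q ^ ((f : ℤ) - α - a))) =
      qbarTerm q a b α β f *
        (q ^ (-(f : ℤ) - 1 - β) * (1 - q⁻¹ ^ (b - f)) * (1 - q ^ ((f : ℤ) - α))) := by
    calc _ = (gaussBinom q⁻¹ b (f + 1) * (1 - q⁻¹ ^ (f + 1)))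
            * q ^ (-(((f + 1 + 1).choose 2 : ℕ) : ℤ) - β * (f + 1 : ℕ))
            * (qbarInner q a α (f + 1) * (1 - q ^ ((f : ℤ) - α - a))) := by rw [qbarTerm]; ring
      _ = _ := by
        rw [gaussBinom_succ_mul hx₀ hx₁ (by omega), hpow, qbarInner_succ_mul, qbarTerm]; ring
  refine lt_of_mul_lt_mul_right ?_ hD.le
  rw [hmul]
  exact mul_lt_mul_of_pos_left (qbarTerm_ratio_lt hq hβ hfα hfb) (qbarTerm_pos hq₁ (by omega))

lemma sum_qbarTerm_pos (hq : 2 ≤ q) {a b : ℕ} {α β : ℤ} (hα : 0 ≤ α) (hβ : 0 ≤ β)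
    (hb : b ≤ α + a) : 0 < ∑ f ∈ range (b + 1), (-1) ^ f * qbarTerm q a b α β f := by
  obtain ⟨m, hmb, hmα, hm⟩ : ∃ m : ℕ, m ≤ b ∧ (m : ℤ) ≤ α ∧ (m = b ∨ (m : ℤ) = α) :=
    ⟨min b α.toNat, by omega, by omega, by omega⟩
  have hvanish : ∀ f ∈ range (b + 1), f ∉ range (m + 1) → (-1) ^ f * qbarTerm q a b α β f = 0 := by
    intro f hf hfm
    rw [mem_range] at hf hfm
    rw [qbarTerm_eq_zero (by omega) (by omega), mul_zero]
  rw [← sum_subset (range_subset_range.2 (by omega : m + 1 ≤ b + 1)) hvanish]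
  exact (sum_range_alternating_mem_Ioc m (t := qbarTerm q a b α β)
    (fun f hf => qbarTerm_pos (by linarith) (by omega))
    fun f hf => qbarTerm_succ_lt hq hβ (by omega) (by omega)).1

lemma Qbar_comm (lm l pm ph s₁ s₂ : ℤ) : Qbar q lm l pm ph s₁ s₂ = Qbar q pm ph lm l s₂ s₁ := by
  simp only [Qbar, Qf]
  rw [sum_comm]
  congr 1
  · rw [mul_right_comm]
    ring_nf
  · refine sum_congr rfl fun f _ => sum_congr rfl fun e _ => ?_
    rw [add_comm f e]
    ring_nf

lemma Qbar_pos (hq : 2 ≤ q) {lm l pm ph s₁ s₂ : ℤ} (hl : l ≤ lm) (hp : ph ≤ pm)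
    (hα : 0 ≤ s₁ + l - ph) (hβ : 0 ≤ s₂ + ph - l) (hα' : 0 ≤ s₁ + lm - pm) :
    0 < Qbar q lm l pm ph s₁ s₂ := by
  obtain ⟨a, rfl⟩ := Int.le.dest hl
  obtain ⟨b, rfl⟩ := Int.le.dest hp
  rw [Qbar_add_eq_sum (by linarith)]
  exact sum_qbarTerm_pos hq hα hβ (by omega)

lemma Qbar_eq_zero_of_neg_left (hq : 1 < q) {lm l pm ph s₁ s₂ : ℤ} (hl : l ≤ lm) (hp : ph ≤ pm)
    (hα : s₁ + l - ph < 0) (hα' : 0 ≤ s₁ + lm - pm) : Qbar q lm l pm ph s₁ s₂ = 0 := by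
  obtain ⟨a, rfl⟩ := Int.le.dest hl
  obtain ⟨b, rfl⟩ := Int.le.dest hp
  rw [Qbar_add_eq_sum hq]
  refine sum_eq_zero fun f hf => ?_
  rw [mem_range] at hf
  rw [qbarTerm_eq_zero (by omega) (by omega), mul_zero]

lemma Qbar_eq_zero_of_neg_right (hq : 1 < q) {lm l pm ph s₁ s₂ : ℤ} (hl : l ≤ lm) (hp : ph ≤ pm)
    (hβ : s₂ + ph - l < 0) (hβ' : 0 ≤ s₂ + pm - lm) : Qbar q lm l pm ph s₁ s₂ = 0 := by
  rw [Qbar_comm]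
  exact Qbar_eq_zero_of_neg_left hq hp hl hβ hβ'

end Qbar

section Nu

variable {q : ℝ}

lemma etaInf_pos (hq : 1 < q) : 0 < etaInf q := by
  have hx₁ : q⁻¹ < 1 := inv_lt_one_of_one_lt₀ hq
  have hterm : ∀ i : ℕ, 1 - q ^ (-(i : ℝ) - 1) = 1 + -q⁻¹ ^ (i + 1) := fun i => by
    rw [rpow_neg_natCast_sub_one (by linarith)]; ring
  have hsum : Summable fun i : ℕ => -q⁻¹ ^ (i + 1) :=
    ((summable_nat_add_iff 1).2 (summable_geometric_of_lt_one (by positivity) hx₁)).neg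
  have hpos : ∀ i : ℕ, 0 < 1 - q ^ (-(i : ℝ) - 1) := fun i => by
    rw [rpow_neg_natCast_sub_one (by linarith)]
    exact one_sub_pow_pos (by positivity) hx₁ i.succ_ne_zero
  have hlog : Summable fun i : ℕ => Real.log (1 - q ^ (-(i : ℝ) - 1)) := by
    simpa only [hterm] using Real.summable_log_one_add_of_summable hsum
  rw [etaInf, ← Real.rexp_tsum_eq_tprod hpos hlog]
  exact Real.exp_pos _

lemma tprod_etaQ_pos (hq : 1 < q) (lam ph : PartitionSeq) :
    0 < ∏' j, (etaQ q (lam.1 j - lam.1 (j + 1)) * etaQ q (ph.1 j - ph.1 (j + 1))) := by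
  obtain ⟨N₁, h₁⟩ := lam.2.2
  obtain ⟨N₂, h₂⟩ := ph.2.2
  rw [tprod_eq_prod (s := range (max N₁ N₂)) fun j hj => by
    rw [mem_range, not_lt] at hj
    rw [h₁ j (by omega), h₁ (j + 1) (by omega), h₂ j (by omega), h₂ (j + 1) (by omega)]
    simp [etaQ]]
  exact prod_pos fun j _ => mul_pos (etaQ_pos hq _) (etaQ_pos hq _)

lemma prod_one_sub_rpow_pos (hq : 1 < q) {s : ℤ} (hs : 0 ≤ s) (n : ℕ) :
    0 < ∏ i ∈ range n, (1 - q ^ (-(s : ℝ) - ((i : ℝ) + 1))) := by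
  have hs' : (0 : ℝ) ≤ s := by exact_mod_cast hs
  exact prod_pos fun i _ => sub_pos.2 (Real.rpow_lt_one_of_one_lt_of_neg hq
    (by linarith [(i.cast_nonneg : (0 : ℝ) ≤ i)]))

lemma nuDP_pos (hq : 2 ≤ q) {s₁ s₂ : ℤ} (hs₁ : 0 ≤ s₁) (hs₂ : 0 ≤ s₂) {r : ℕ} (hr : 1 ≤ r)
    (lam ph : PartitionSeq)
    (hband : ∀ j < r, -s₁ ≤ (lam.1 j : ℤ) - (ph.1 j : ℤ) ∧ (lam.1 j : ℤ) - (ph.1 j : ℤ) ≤ s₂) :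
    0 < nuDP q s₁ s₂ r lam.1 ph.1 := by
  have hq₁ : 1 < q := by linarith
  have h₀ := hband 0 hr
  rw [nuDP, if_neg (by omega)]
  have hη := tprod_etaQ_pos hq₁ lam ph
  have hηZ : ∀ k, 0 < etaZ q k := fun k => etaQ_pos hq₁ _
  have hC : 0 < etaInf q * etaZ q (s₁ + s₂) /
      (etaZ q (s₂ - (lam.1 0 : ℤ) + (ph.1 0 : ℤ)) * etaZ q (s₁ + (lam.1 0 : ℤ) - (ph.1 0 : ℤ))) :=
    div_pos (mul_pos (etaInf_pos hq₁) (hηZ _)) (mul_pos (hηZ _) (hηZ _))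
  have hQ : 0 < ∏ j ∈ range (r - 1),
      Qbar q (lam.1 j) (lam.1 (j + 1)) (ph.1 j) (ph.1 (j + 1)) s₁ s₂ := by
    refine prod_pos fun j hj => ?_
    rw [mem_range] at hj
    have hj₀ := hband j (by omega)
    have hj₁ := hband (j + 1) (by omega)
    exact Qbar_pos hq (by exact_mod_cast lam.2.1 j) (by exact_mod_cast ph.2.1 j)
      (by omega) (by omega) (by omega)
  have hE₁ := prod_one_sub_rpow_pos hq₁ hs₁ (lam.1 (r - 1))
  have hE₂ := prod_one_sub_rpow_pos hq₁ hs₂ (ph.1 (r - 1))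
  positivity

lemma nuDP_eq_zero (hq : 1 < q) (s₁ s₂ : ℤ) {r : ℕ} (lam ph : PartitionSeq) {j : ℕ} (hj : j < r)
    (hbad : ¬(-s₁ ≤ (lam.1 j : ℤ) - (ph.1 j : ℤ) ∧ (lam.1 j : ℤ) - (ph.1 j : ℤ) ≤ s₂)) :
    nuDP q s₁ s₂ r lam.1 ph.1 = 0 := by
  induction j with
  | zero => rw [nuDP, if_pos (by omega)]
  | succ k ih =>
    by_cases hk : -s₁ ≤ (lam.1 k : ℤ) - (ph.1 k : ℤ) ∧ (lam.1 k : ℤ) - (ph.1 k : ℤ) ≤ s₂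
    · have hl : (lam.1 (k + 1) : ℤ) ≤ lam.1 k := by exact_mod_cast lam.2.1 k
      have hp : (ph.1 (k + 1) : ℤ) ≤ ph.1 k := by exact_mod_cast ph.2.1 k
      have hzero : Qbar q (lam.1 k) (lam.1 (k + 1)) (ph.1 k) (ph.1 (k + 1)) s₁ s₂ = 0 := by
        rcases not_and_or.1 hbad with h | h
        · exact Qbar_eq_zero_of_neg_left hq hl hp (by omega) (by omega)
        · exact Qbar_eq_zero_of_neg_right hq hl hp (by omega) (by omega)
      rw [nuDP]
      split_ifs
      · rfl
      · rw [prod_eq_zero (mem_range.2 (by omega : k < r - 1)) hzero]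
        simp
    · exact ih (by omega) hk

end Nu

/-- Let `q` be a prime power, `s₁, s₂ ≥ 0` integers, `r ≥ 1` an integer.  Then
`ν(λ,φ) ≥ 0` for all partitions `λ, φ`, and `ν(λ,φ) > 0` iff `-s₁ ≤ λ_j - φ_j ≤ s₂` for all
`1 ≤ j ≤ r`. -/
theorem stmt_9 (q : ℕ) (hq : IsPrimePow q)
    (s₁ s₂ : ℤ) (hs₁ : 0 ≤ s₁) (hs₂ : 0 ≤ s₂) (r : ℕ) (hr : 1 ≤ r)
    (lam ph : PartitionSeq) :
    0 ≤ nuDP (q : ℝ) s₁ s₂ r lam.1 ph.1 ∧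
    (0 < nuDP (q : ℝ) s₁ s₂ r lam.1 ph.1 ↔
      ∀ j < r, -s₁ ≤ (lam.1 j : ℤ) - (ph.1 j : ℤ) ∧ (lam.1 j : ℤ) - (ph.1 j : ℤ) ≤ s₂) := by
  have hq₂ : (2 : ℝ) ≤ q := by exact_mod_cast hq.two_le
  by_cases hband : ∀ j < r, -s₁ ≤ (lam.1 j : ℤ) - (ph.1 j : ℤ) ∧ (lam.1 j : ℤ) - (ph.1 j : ℤ) ≤ s₂
  · have hpos := nuDP_pos hq₂ hs₁ hs₂ hr lam ph hband
    exact ⟨hpos.le, iff_of_true hpos hband⟩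
  · obtain ⟨j, hj, hbad⟩ := not_forall₂.1 hband
    rw [nuDP_eq_zero (by linarith) s₁ s₂ lam ph hj hbad]
    exact ⟨le_rfl, iff_of_false (lt_irrefl 0) hband⟩
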